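/- The linear map φ on R^4 sending the standard basis vectors e_1, e_2, e_3, e_4 to (1/2)(-1,1,1,1), (1/2)(-1,-1,1,-1), (1/2)(-1,-1,-1,1), (1/2)(-1,1,-1,-1) respectively is an isometry of order 3 that preserves the lattice D_4, and φ acts on D_4 without nonzero fixed vectors. -/

import Mathlib

/-!
The four images of the basis vectors have norm 1 and are pairwise orthogonal, so `φ` is an
isometry. Moreover `φ` satisfies `φ² + φ + 1 = 0`, the cyclotomic relation of a primitive cube
root of unity; `φ³ = 1` follows from `φ³ - 1 = (φ - 1)(φ² + φ + 1)`, and a fixed vector `x`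
satisfies `3x = 0`. With `s = x₁+x₂+x₃+x₄`, every coordinate of `φx` is `±s/2` up to an
integer, and the coordinates of `φx` sum to `s - 2(x₂+x₃+x₄)`, so `φ` preserves `D₄`.
-/

open Finset

/-- The root lattice `D₄ = {x ∈ ℤ⁴ : x₁+x₂+x₃+x₄ ∈ 2ℤ}`, realized inside `ℚ⁴`. -/
def D4Lat : Set (Fin 4 → ℚ) :=
  {x | (∀ i, ∃ m : ℤ, x i = m) ∧ ∃ m : ℤ, ∑ i, x i = 2 * m}

/-- The linear map `φ` sending the standard basis vectors `e₁, e₂, e₃, e₄` to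
`(1/2)(-1,1,1,1)`, `(1/2)(-1,-1,1,-1)`, `(1/2)(-1,-1,-1,1)`, `(1/2)(-1,1,-1,-1)`. -/
def phiD4 : (Fin 4 → ℚ) → (Fin 4 → ℚ) :=
  fun x => ![(-x 0 - x 1 - x 2 - x 3) / 2, (x 0 - x 1 - x 2 + x 3) / 2,
             (x 0 + x 1 - x 2 - x 3) / 2, (x 0 - x 1 + x 2 - x 3) / 2]

theorem pow_three_eq_one_of_sq_add_self_add_one {R : Type*} [Ring R] {a : R}
    (h : a ^ 2 + a + 1 = 0) : a ^ 3 = 1 :=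
  calc a ^ 3 = (a - 1) * (a ^ 2 + a + 1) + 1 := by noncomm_ring
    _ = 1 := by rw [h, mul_zero, zero_add]

theorem Module.End.eq_zero_of_apply_eq_self_of_sq_add_self_add_one {K V : Type*} [Field K]
    [AddCommGroup V] [Module K V] {f : Module.End K V} (hf : f ^ 2 + f + 1 = 0)
    (h3 : (3 : K) ≠ 0) {x : V} (hx : f x = x) : x = 0 := by
  have hx3 : (3 : K) • x = 0 := by
    have := LinearMap.congr_fun hf x
    simp only [LinearMap.add_apply, pow_two, Module.End.mul_apply, Module.End.one_apply, hx,
      LinearMap.zero_apply] at this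
    rw [← this]
    module
  exact (smul_eq_zero.mp hx3).resolve_left h3

def phiD4Lin : Module.End ℚ (Fin 4 → ℚ) where
  toFun := phiD4
  map_add' x y := by
    ext i
    fin_cases i <;> simp only [phiD4, Pi.add_apply, Fin.reduceFinMk, Matrix.cons_val] <;> ring
  map_smul' c x := by
    ext i
    fin_cases i <;>
      simp only [phiD4, Pi.smul_apply, smul_eq_mul, RingHom.id_apply, Fin.reduceFinMk,
        Matrix.cons_val] <;> ring

theorem phiD4_phiD4_add_phiD4_add_self (x : Fin 4 → ℚ) : phiD4 (phiD4 x) + phiD4 x + x = 0 := by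
  ext i
  fin_cases i <;>
    simp only [phiD4, Pi.add_apply, Pi.zero_apply, Fin.reduceFinMk, Matrix.cons_val] <;> ring

theorem phiD4Lin_sq_add_self_add_one : phiD4Lin ^ 2 + phiD4Lin + 1 = 0 :=
  LinearMap.ext phiD4_phiD4_add_phiD4_add_self

theorem phiD4_phiD4_phiD4 (x : Fin 4 → ℚ) : phiD4 (phiD4 (phiD4 x)) = x :=
  LinearMap.congr_fun (pow_three_eq_one_of_sq_add_self_add_one phiD4Lin_sq_add_self_add_one) x

theorem eq_zero_of_phiD4_eq_self {x : Fin 4 → ℚ} (hx : phiD4 x = x) : x = 0 :=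
  Module.End.eq_zero_of_apply_eq_self_of_sq_add_self_add_one phiD4Lin_sq_add_self_add_one
    (by norm_num) hx

theorem phiD4_ne_id : phiD4 ≠ id := fun h =>
  one_ne_zero (eq_zero_of_phiD4_eq_self (congrFun h 1))

theorem dotProduct_phiD4_phiD4 (x y : Fin 4 → ℚ) : phiD4 x ⬝ᵥ phiD4 y = x ⬝ᵥ y := by
  simp only [dotProduct, Fin.sum_univ_four, phiD4, Matrix.cons_val]
  ring

theorem mapsTo_phiD4_D4Lat : Set.MapsTo phiD4 D4Lat D4Lat := by
  rintro x ⟨hint, m, hsum⟩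
  choose a ha using hint
  rw [Fin.sum_univ_four] at hsum
  refine ⟨fun i => ?_, m - a 1 - a 2 - a 3, ?_⟩
  · fin_cases i <;> simp only [phiD4, Fin.reduceFinMk, Matrix.cons_val]
    exacts [⟨-m, by push_cast; linarith⟩, ⟨m - a 1 - a 2, by push_cast; linarith [ha 1, ha 2]⟩,
      ⟨m - a 2 - a 3, by push_cast; linarith [ha 2, ha 3]⟩,
      ⟨m - a 1 - a 3, by push_cast; linarith [ha 1, ha 3]⟩]
  · simp only [Fin.sum_univ_four, phiD4, Matrix.cons_val]
    push_cast
    linarith [ha 1, ha 2, ha 3]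

/-- `φ` is an isometry of order 3 (`φ³ = id`, `φ ≠ id`, `⟨φx, φy⟩ = ⟨x, y⟩`) preserving
the lattice `D₄`, and it has no nonzero fixed vector in `D₄`. -/
theorem phiD4_isometry_order_three_fixed_point_free :
    (∀ x, phiD4 (phiD4 (phiD4 x)) = x) ∧
    (phiD4 ≠ id) ∧
    (∀ x y : Fin 4 → ℚ, ∑ i, phiD4 x i * phiD4 y i = ∑ i, x i * y i) ∧
    (∀ x ∈ D4Lat, phiD4 x ∈ D4Lat) ∧
    (∀ x ∈ D4Lat, phiD4 x = x → x = 0) :=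
  ⟨phiD4_phiD4_phiD4, phiD4_ne_id, dotProduct_phiD4_phiD4, mapsTo_phiD4_D4Lat,
    fun _ _ => eq_zero_of_phiD4_eq_self⟩
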